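/- Let α ∈ ℝ, β < 0, σ > 0, and let G be the Vasicek Green's function. For every smooth compactly supported function φ : ℝ → ℝ, every t ≥ 0 and every x ∈ ℝ: lim_{s↓t} ∫_ℝ G(t,s;x,ξ)·φ(ξ) dξ = φ(x). In other words, G(t,s;x,·) converges to the Dirac mass at x in the distributional sense as s − t → 0⁺. -/

import Mathlib

/-- Squared width `Σ(t,s)²` of the Vasicek Green's function. -/
noncomputable def vasicekSigmaSq (β σ t s : ℝ) : ℝ :=
  -(σ ^ 2 / (2 * β)) * (1 - Real.exp (2 * β * (s - t)))

/-- Mean `μ(t,s;x)` of the Vasicek Green's function. -/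
noncomputable def vasicekMu (α β σ t s x : ℝ) : ℝ :=
  x * Real.exp (β * (s - t)) - (α / β) * (1 - Real.exp (β * (s - t))) +
    (σ ^ 2 / (2 * β ^ 2)) *
      (Real.exp (-(β * (s - t))) + Real.exp (β * (s - t)) - 2)

/-- Factor `C₁(t,s;ξ)` of the Vasicek Green's function. -/
noncomputable def vasicekC1 (α β σ t s ξ : ℝ) : ℝ :=
  Real.exp (-((σ ^ 2 * Real.exp (-(2 * β * (s - t)))
      - 4 * ξ * β ^ 2 * Real.exp (-(β * (s - t)))
      - 4 * σ ^ 2 * Real.exp (-(β * (s - t)))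
      - 4 * α * β * Real.exp (-(β * (s - t)))) / (4 * β ^ 3)))

/-- Factor `C₂(t,s;ξ)` of the Vasicek Green's function. -/
noncomputable def vasicekC2 (α β σ t s ξ : ℝ) : ℝ :=
  Real.exp ((σ ^ 2 / (2 * β ^ 2) + α / β) * (s - t)
    - 3 * σ ^ 2 / (4 * β ^ 3) - ξ / β - α / β ^ 2)

/-- The Vasicek Green's function
`G(t,s;x,ξ) = C₁C₂/(√(2π)Σ) · exp(−(ξ−μ)²/(2Σ²))`. -/
noncomputable def vasicekG (α β σ t s x ξ : ℝ) : ℝ :=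
  vasicekC1 α β σ t s ξ * vasicekC2 α β σ t s ξ /
    (Real.sqrt (2 * Real.pi) * Real.sqrt (vasicekSigmaSq β σ t s)) *
    Real.exp (-((ξ - vasicekMu α β σ t s x) ^ 2 / (2 * vasicekSigmaSq β σ t s)))

/-- ξ-independent part of the exponent of `C₁·C₂`. -/
noncomputable def vasA (α β σ t s : ℝ) : ℝ :=
  -((σ ^ 2 * Real.exp (-(β * (s - t))) ^ 2
      - 4 * σ ^ 2 * Real.exp (-(β * (s - t)))
      - 4 * α * β * Real.exp (-(β * (s - t)))) / (4 * β ^ 3))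
    + (σ ^ 2 / (2 * β ^ 2) + α / β) * (s - t)
    - 3 * σ ^ 2 / (4 * β ^ 3) - α / β ^ 2

/-- coefficient of ξ in the exponent of `C₁·C₂`. -/
noncomputable def vasb (β t s : ℝ) : ℝ := (Real.exp (-(β * (s - t))) - 1) / β

theorem vasicekC1C2 (α β σ t s ξ : ℝ) (hβ : β ≠ 0) :
    vasicekC1 α β σ t s ξ * vasicekC2 α β σ t s ξ
      = Real.exp (vasA α β σ t s + vasb β t s * ξ) := by
  unfold vasicekC1 vasicekC2 vasA vasb
  rw [← Real.exp_add]
  congr 1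
  rw [show -(2 * β * (s - t)) = -(β * (s - t)) + -(β * (s - t)) by ring, Real.exp_add,
    ← sq]
  field_simp
  ring

theorem vasicekG_key (α β σ t s x z : ℝ) (hβ : β ≠ 0)
    (hv : 0 < vasicekSigmaSq β σ t s) :
    vasicekG α β σ t s x
        (vasicekMu α β σ t s x + vasb β t s * vasicekSigmaSq β σ t s
          + Real.sqrt (vasicekSigmaSq β σ t s) * z)
      * Real.sqrt (vasicekSigmaSq β σ t s)
    = Real.exp (vasA α β σ t s + vasb β t s * vasicekMu α β σ t s x
          + vasb β t s ^ 2 * vasicekSigmaSq β σ t s / 2)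
        * ((Real.sqrt (2 * Real.pi))⁻¹ * Real.exp (-(z ^ 2 / 2))) := by
  set v := vasicekSigmaSq β σ t s with hvdef
  set μ := vasicekMu α β σ t s x with hμdef
  set b := vasb β t s with hbdef
  set A := vasA α β σ t s with hAdef
  set S := Real.sqrt v with hSdef
  have hS2 : S ^ 2 = v := Real.sq_sqrt hv.le
  have hSpos : 0 < S := Real.sqrt_pos.2 hv
  have hπ : 0 < Real.sqrt (2 * Real.pi) :=
    Real.sqrt_pos.2 (by positivity)
  unfold vasicekG
  rw [vasicekC1C2 _ _ _ _ _ _ hβ]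
  rw [div_mul_eq_mul_div, div_mul_eq_mul_div, ← Real.exp_add]
  rw [← hAdef, ← hbdef, ← hvdef, ← hμdef, ← hSdef]
  rw [show A + b * (μ + b * v + S * z) + -((μ + b * v + S * z - μ) ^ 2 / (2 * v))
      = (A + b * μ + b ^ 2 * v / 2) + -(z ^ 2 / 2) by
    rw [← hS2]; field_simp; ring]
  rw [Real.exp_add]
  field_simp

set_option maxHeartbeats 1000000 in
open MeasureTheory Filter Set in
/-- Delta-limit property of the Vasicek Green's function: for every smooth compactly
supported `φ`, `∫ G(t,s;x,ξ)φ(ξ)dξ → φ(x)` as `s ↓ t`; i.e. `G(t,s;x,·)` converges to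
the Dirac mass at `x` in the distributional sense. -/
theorem vasicek_green_delta_limit
    (α β σ : ℝ) (hβ : β < 0) (hσ : 0 < σ)
    (φ : ℝ → ℝ) (hφ : ContDiff ℝ (⊤ : ℕ∞) φ) (hsupp : HasCompactSupport φ) :
    ∀ t : ℝ, 0 ≤ t → ∀ x : ℝ,
      Filter.Tendsto (fun s => ∫ ξ : ℝ, vasicekG α β σ t s x ξ * φ ξ)
        (nhdsWithin t (Set.Ioi t)) (nhds (φ x)) := by
  intro t ht x
  have hβ' : β ≠ 0 := ne_of_lt hβ
  set v : ℝ → ℝ := fun s => vasicekSigmaSq β σ t s with hvdef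
  set μf : ℝ → ℝ := fun s => vasicekMu α β σ t s x with hμdef
  set bf : ℝ → ℝ := fun s => vasb β t s with hbdef
  set Af : ℝ → ℝ := fun s => vasA α β σ t s with hAdef
  set S : ℝ → ℝ := fun s => Real.sqrt (v s) with hSdef
  set m : ℝ → ℝ := fun s => μf s + bf s * v s with hmdef
  set D : ℝ → ℝ := fun s => Real.exp (Af s + bf s * μf s + bf s ^ 2 * v s / 2) with hDdef
  set gauss : ℝ → ℝ := fun z => (Real.sqrt (2 * Real.pi))⁻¹ * Real.exp (-(z ^ 2 / 2))
    with hgaussdef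
  have hgauss_nonneg : ∀ z, 0 ≤ gauss z := fun z => by
    rw [hgaussdef]; positivity
  have hgauss_cont : Continuous gauss := by
    rw [hgaussdef]; fun_prop
  -- positivity of the variance for s > t
  have hvpos : ∀ s ∈ Set.Ioi t, 0 < v s := by
    intro s hs
    have h1 : Real.exp (2 * β * (s - t)) < 1 := by
      rw [Real.exp_lt_one_iff]
      have : 0 < s - t := sub_pos.2 hs
      nlinarith
    have h2 : 0 < -(σ ^ 2 / (2 * β)) := by
      have : σ ^ 2 / (2 * β) < 0 := div_neg_of_pos_of_neg (by positivity) (by linarith)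
      linarith
    have := mul_pos h2 (by linarith : (0:ℝ) < 1 - Real.exp (2 * β * (s - t)))
    simpa [hvdef, vasicekSigmaSq] using this
  -- continuity and values at s = t
  have hcv : Continuous v := by
    rw [hvdef]; unfold vasicekSigmaSq; fun_prop
  have hcμ : Continuous μf := by
    rw [hμdef]; unfold vasicekMu; fun_prop
  have hcb : Continuous bf := by
    rw [hbdef]; unfold vasb; fun_prop
  have hcA : Continuous Af := by
    rw [hAdef]; unfold vasA; fun_prop
  have hv0 : v t = 0 := by simp [hvdef, vasicekSigmaSq]
  have hμ0 : μf t = x := by simp [hμdef, vasicekMu]; norm_num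
  have hb0 : bf t = 0 := by simp [hbdef, vasb]
  have hA0 : Af t = 0 := by
    simp only [hAdef, vasA, sub_self, mul_zero, neg_zero, Real.exp_zero, one_pow, mul_one]
    field_simp
    ring
  -- limits along 𝓝[>] t
  have hle : nhdsWithin t (Set.Ioi t) ≤ nhds t := nhdsWithin_le_nhds
  have lD : Tendsto D (nhdsWithin t (Set.Ioi t)) (nhds 1) := by
    have hcD : Continuous D := by
      rw [hDdef]
      exact Real.continuous_exp.comp (((hcA.add (hcb.mul hcμ)).add
        (((hcb.pow 2).mul hcv).div_const 2)))
    have := (hcD.tendsto t).mono_left hle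
    simpa [hDdef, hA0, hb0, hv0] using this
  have lm : Tendsto m (nhdsWithin t (Set.Ioi t)) (nhds x) := by
    have hcm : Continuous m := hcμ.add (hcb.mul hcv)
    have := (hcm.tendsto t).mono_left hle
    simpa [hmdef, hμ0, hb0, hv0] using this
  have lS : Tendsto S (nhdsWithin t (Set.Ioi t)) (nhds 0) := by
    have hcS : Continuous S := Real.continuous_sqrt.comp hcv
    have := (hcS.tendsto t).mono_left hle
    simpa [hSdef, hv0] using this
  -- change of variables: equality of integrals for s > t
  have key : ∀ s ∈ Set.Ioi t,
      (∫ ξ : ℝ, vasicekG α β σ t s x ξ * φ ξ)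
        = ∫ z : ℝ, D s * (φ (m s + S s * z) * gauss z) := by
    intro s hs
    have hvs := hvpos s hs
    have hSpos : 0 < S s := Real.sqrt_pos.2 hvs
    have h1 : ∀ z : ℝ, D s * (φ (m s + S s * z) * gauss z)
        = (vasicekG α β σ t s x (S s * z + m s) * φ (S s * z + m s)) * S s := by
      intro z
      have hk := vasicekG_key α β σ t s x z hβ' hvs
      have hx : S s * z + m s = μf s + bf s * v s + S s * z := by ring
      rw [hx]
      calc D s * (φ (μf s + bf s * v s + S s * z) * gauss z)
          = (D s * gauss z) * φ (μf s + bf s * v s + S s * z) := by ring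
        _ = (vasicekG α β σ t s x (μf s + bf s * v s + S s * z) * S s)
              * φ (μf s + bf s * v s + S s * z) := by
            rw [hDdef, hgaussdef]; rw [← hk]
        _ = _ := by ring
    rw [show (fun z : ℝ => D s * (φ (m s + S s * z) * gauss z))
        = fun z : ℝ => ((fun ξ => vasicekG α β σ t s x ξ * φ ξ) (S s * z + m s)) * S s
        from funext h1]
    rw [MeasureTheory.integral_mul_const]
    rw [show (fun z : ℝ => (fun ξ => vasicekG α β σ t s x ξ * φ ξ) (S s * z + m s))
        = fun z : ℝ => (fun y => vasicekG α β σ t s x (y + m s) * φ (y + m s)) (S s * z)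
        from rfl]
    rw [MeasureTheory.Measure.integral_comp_mul_left
      (fun y => vasicekG α β σ t s x (y + m s) * φ (y + m s)) (S s)]
    rw [MeasureTheory.integral_add_right_eq_self
      (fun ξ => vasicekG α β σ t s x ξ * φ ξ) (m s)]
    rw [abs_of_pos (inv_pos.2 hSpos), smul_eq_mul]
    field_simp
  -- bound on φ
  obtain ⟨M, hM⟩ := hsupp.exists_bound_of_continuous hφ.continuous
  have hM0 : 0 ≤ M := le_trans (norm_nonneg _) (hM 0)
  -- gaussian integrability and total mass
  have hgauss_int : Integrable gauss := by
    have h := integrable_exp_neg_mul_sq (show (0:ℝ) < 1/2 by norm_num)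
    have h2 : Integrable (fun z : ℝ => Real.exp (-(z ^ 2 / 2))) := by
      have : (fun z : ℝ => Real.exp (-(z ^ 2 / 2)))
          = fun z : ℝ => Real.exp (-(1/2) * z ^ 2) := by funext z; ring_nf
      rw [this]; exact h
    rw [hgaussdef]
    exact h2.const_mul _
  have hgauss_total : (∫ z : ℝ, gauss z) = 1 := by
    rw [hgaussdef]
    rw [MeasureTheory.integral_const_mul]
    rw [show (fun z : ℝ => Real.exp (-(z ^ 2 / 2)))
        = fun z : ℝ => Real.exp (-(1/2) * z ^ 2) by funext z; ring_nf]
    rw [integral_gaussian]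
    rw [show Real.pi / (1/2) = 2 * Real.pi by ring]
    exact inv_mul_cancel₀ (ne_of_gt (Real.sqrt_pos.2 (by positivity)))
  -- dominated convergence
  have hDevent : ∀ᶠ s in nhdsWithin t (Set.Ioi t), D s ≤ 2 :=
    lD.eventually (eventually_le_nhds (by norm_num : (1:ℝ) < 2))
  have main : Tendsto (fun s => ∫ z : ℝ, D s * (φ (m s + S s * z) * gauss z))
      (nhdsWithin t (Set.Ioi t)) (nhds (∫ z : ℝ, φ x * gauss z)) := by
    apply MeasureTheory.tendsto_integral_filter_of_dominated_convergence
      (fun z => 2 * (M * gauss z))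
    · refine Filter.Eventually.of_forall fun s => ?_
      exact ((continuous_const.mul
        (((hφ.continuous.comp (continuous_const.add
          (continuous_const.mul continuous_id))).mul hgauss_cont)))).aestronglyMeasurable
    · filter_upwards [hDevent] with s hD2
      refine MeasureTheory.ae_of_all _ fun z => ?_
      have h1 : ‖φ (m s + S s * z)‖ ≤ M := hM _
      have h2 : ‖gauss z‖ = gauss z := abs_of_nonneg (hgauss_nonneg z)
      have h3 : ‖D s‖ ≤ 2 := by
        rw [Real.norm_eq_abs, abs_of_pos (Real.exp_pos _)]; exact hD2
      rw [norm_mul, norm_mul, h2]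
      exact mul_le_mul h3 (mul_le_mul h1 le_rfl (hgauss_nonneg z) hM0)
        (by positivity) (by norm_num)
    · exact (hgauss_int.const_mul M).const_mul 2
    · refine MeasureTheory.ae_of_all _ fun z => ?_
      have hmz : Tendsto (fun s => m s + S s * z) (nhdsWithin t (Set.Ioi t)) (nhds x) := by
        have := lm.add (lS.mul_const z)
        simpa using this
      have hφz : Tendsto (fun s => φ (m s + S s * z)) (nhdsWithin t (Set.Ioi t))
          (nhds (φ x)) := (hφ.continuous.tendsto x).comp hmz
      have := lD.mul (hφz.mul_const (gauss z))
      simpa using this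
  have hfin : (∫ z : ℝ, φ x * gauss z) = φ x := by
    rw [MeasureTheory.integral_const_mul, hgauss_total, mul_one]
  rw [hfin] at main
  refine main.congr' ?_
  exact Filter.eventuallyEq_of_mem self_mem_nhdsWithin fun s hs => (key s hs).symm
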